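/- arXiv:1710.03707 — 4 statements merged into one kernel-verified Lean document; each statement's English description precedes it below -/
import Mathlib

section
/- Let Λ be a finite group of cardinality ℓ with a fixed bijection ‖·‖ : Λ → {0,…,ℓ−1}. Define 𝔫 on the restricted wreath product G = (⊕_ℤ Λ) ⋊ ℤ by 𝔫(μ, k) = Σ_{n ≥ k} ‖μ_n‖ · ℓ^{n−k} (a finite sum since μ has finite support). Then for any g = (μ, k) ∈ G and any λ ∈ Λ, 𝔫(g · t⁻¹ · [λ]₀) = ℓ · 𝔫(g) + ‖μ_{k−1} · λ‖, where t = (1, 1) ∈ G is the generator of ℤ and [λ]₀ ∈ ⊕_ℤ Λ is the element supported at 0 with value λ. -/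
/-!
Multiplying by `t⁻¹` moves the reading position of `𝔫` from `k` one step down to `k - 1`, and
`[λ]₀` then changes only the lamp at that new position, which becomes `μ_{k-1} λ`. So `𝔫` of the
product is the base-`ℓ` expansion of `𝔫(g)` shifted by one digit, with new lowest digit
`‖μ_{k-1} λ‖`. Both sides may be computed over any finite set containing the relevant supports,
since lamps equal to `1` contribute the digit `‖1‖ = 0`.
-/

/-- The subgroup of finitely supported functions `ℤ → Λ`, i.e. `⊕_ℤ Λ`. -/
def FinSupp (Λ : Type*) [Group Λ] : Subgroup (ℤ → Λ) where
  carrier := {f | (Function.mulSupport f).Finite}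
  one_mem' := by simpa using Set.finite_empty
  mul_mem' := fun hf hg => ((hf.union hg).subset (Function.mulSupport_mul _ _))
  inv_mem' := fun hf => by simpa using hf

/-- The shift automorphism of `⊕_ℤ Λ` by `k`: `(shift k f) n = f (n - k)`. -/
def shiftAut (Λ : Type*) [Group Λ] (k : ℤ) : MulAut (FinSupp Λ) where
  toFun f := ⟨fun n => f.val (n - k), (f.prop.image (· + k)).subset (by
    intro n hn
    exact ⟨n - k, hn, by ring⟩)⟩
  invFun f := ⟨fun n => f.val (n + k), (f.prop.image (· - k)).subset (by
    intro n hn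
    exact ⟨n + k, hn, by ring⟩)⟩
  left_inv f := by ext n; simp
  right_inv f := by ext n; simp
  map_mul' f g := rfl

/-- The lamplighter group `G = (⊕_ℤ Λ) ⋊ ℤ`, with the generator of `ℤ` acting by the
shift `t [λ]_i t⁻¹ = [λ]_{i+1}`. -/
abbrev Lamp (Λ : Type*) [Group Λ] :=
  SemidirectProduct (FinSupp Λ) (Multiplicative ℤ) (zpowersHom _ (shiftAut Λ 1))

/-- The generator `t` of the `ℤ` factor of the lamplighter group. -/
def tGen (Λ : Type*) [Group Λ] : Lamp Λ :=
  SemidirectProduct.inr (Multiplicative.ofAdd 1)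

/-- `[λ]_i`: the element of `⊕_ℤ Λ` supported at coordinate `i` with value `λ`. -/
def lam {Λ : Type*} [Group Λ] (i : ℤ) (x : Λ) : FinSupp Λ :=
  ⟨fun n => if n = i then x else 1, (Set.finite_singleton i).subset (by
    intro n hn
    by_contra h
    exact hn (if_neg h))⟩

/-- `𝔫(μ tᵏ) = Σ_{n ≥ k, n ∈ supp μ} ‖μ_n‖ ℓ^{n−k}`. -/
noncomputable def nval {Λ : Type*} [Group Λ] (norm : Λ → ℕ) (ℓ : ℕ) (g : Lamp Λ) : ℕ :=
  ∑ n ∈ (g.left.prop.toFinset.filter (fun n => Multiplicative.toAdd g.right ≤ n)),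
    norm (g.left.val n) * ℓ ^ (n - Multiplicative.toAdd g.right).toNat

open Finset

section Digits

variable {R : Type*} [CommSemiring R]

theorem sum_filter_le_zpow_eq_add_mul (a : ℤ → R) (ℓ : R) {s : Finset ℤ} {k : ℤ} (hk : k ∈ s) :
    ∑ n ∈ s with k ≤ n, a n * ℓ ^ (n - k).toNat =
      a k + ℓ * ∑ n ∈ s with k + 1 ≤ n, a n * ℓ ^ (n - (k + 1)).toNat := by
  have hsplit : {n ∈ s | k ≤ n} = insert k {n ∈ s | k + 1 ≤ n} := by
    ext n
    simp only [mem_filter, mem_insert]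
    constructor
    · rintro ⟨hn, hkn⟩
      rcases hkn.eq_or_lt with rfl | hlt
      exacts [Or.inl rfl, Or.inr ⟨hn, hlt⟩]
    · rintro (rfl | ⟨hn, hlt⟩)
      exacts [⟨hk, le_rfl⟩, ⟨hn, by omega⟩]
  rw [hsplit, sum_insert (by simp), sub_self, Int.toNat_zero, pow_zero, mul_one, mul_sum]
  congr 1
  refine sum_congr rfl fun n hn => ?_
  have hexp : (n - k).toNat = (n - (k + 1)).toNat + 1 := by
    have := (mem_filter.1 hn).2
    omega
  rw [hexp, pow_succ]
  ring

end Digits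

section Lamplighter

variable {Λ : Type*} [Group Λ]

theorem shiftAut_zpow_apply (m : ℤ) (f : FinSupp Λ) (n : ℤ) :
    ((shiftAut Λ 1 ^ m) f).val n = f.val (n - m) := by
  induction m using Int.induction_on generalizing f n with
  | zero => simp
  | succ i ih =>
    rw [zpow_add_one, MulAut.mul_apply, ih]
    show f.val (n - i - 1) = _
    ring_nf
  | pred i ih =>
    rw [zpow_sub_one, MulAut.mul_apply, ih]
    show f.val (n - -i + 1) = _
    ring_nf

theorem right_mul_tGen_inv_mul_inl (g : Lamp Λ) (f : FinSupp Λ) :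
    Multiplicative.toAdd (g * (tGen Λ)⁻¹ * SemidirectProduct.inl f).right =
      Multiplicative.toAdd g.right - 1 := by
  simp only [tGen, SemidirectProduct.mul_right, SemidirectProduct.inv_right,
    SemidirectProduct.right_inr, SemidirectProduct.right_inl, mul_one]
  rfl

theorem left_mul_tGen_inv_mul_inl (g : Lamp Λ) (f : FinSupp Λ) (n : ℤ) :
    (g * (tGen Λ)⁻¹ * SemidirectProduct.inl f).left.val n =
      g.left.val n * f.val (n - (Multiplicative.toAdd g.right - 1)) := by
  simp only [tGen, SemidirectProduct.mul_left, SemidirectProduct.inv_left,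
    SemidirectProduct.left_inl, SemidirectProduct.inv_right, SemidirectProduct.left_inr,
    SemidirectProduct.right_inr, SemidirectProduct.mul_right, inv_one, map_one, mul_one]
  show _ * ((shiftAut Λ 1 ^ (Multiplicative.toAdd g.right - 1)) f).val n = _
  rw [shiftAut_zpow_apply]

theorem nval_eq_sum_of_mulSupport_subset {norm : Λ → ℕ} (hnorm : norm 1 = 0) (ℓ : ℕ)
    (g : Lamp Λ) {s : Finset ℤ} (hs : Function.mulSupport g.left.val ⊆ s) :
    nval norm ℓ g = ∑ n ∈ s with Multiplicative.toAdd g.right ≤ n,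
      norm (g.left.val n) * ℓ ^ (n - Multiplicative.toAdd g.right).toNat := by
  refine sum_subset (filter_subset_filter _ fun n hn => hs ((Set.Finite.mem_toFinset _).1 hn))
    fun n hns hn => ?_
  have hn_one : g.left.val n = 1 := by
    by_contra hne
    exact hn (mem_filter.2 ⟨(Set.Finite.mem_toFinset _).2 hne, (mem_filter.1 hns).2⟩)
  rw [hn_one, hnorm, zero_mul]

end Lamplighter

theorem nval_mul_tinv_lam_general {Λ : Type*} [Group Λ] {ℓ : ℕ} (e : Λ ≃ Fin ℓ)
    (he : (e 1 : ℕ) = 0) (g : Lamp Λ) (x : Λ) :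
    nval (fun y => (e y : ℕ)) ℓ (g * (tGen Λ)⁻¹ * SemidirectProduct.inl (lam 0 x)) =
      ℓ * nval (fun y => (e y : ℕ)) ℓ g +
        (e (g.left.val (Multiplicative.toAdd g.right - 1) * x) : ℕ) := by
  set k := Multiplicative.toAdd g.right
  set h := g * (tGen Λ)⁻¹ * SemidirectProduct.inl (lam 0 x)
  have hleft (n : ℤ) : h.left.val n = g.left.val n * if n = k - 1 then x else 1 := by
    rw [left_mul_tGen_inv_mul_inl]
    exact congrArg _ (if_congr (by omega) rfl rfl)
  set s := insert (k - 1) g.left.prop.toFinset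
  have hg : Function.mulSupport g.left.val ⊆ s := fun n hn =>
    mem_insert_of_mem ((Set.Finite.mem_toFinset _).2 hn)
  have hh : Function.mulSupport h.left.val ⊆ s := by
    intro n hn
    rw [Function.mem_mulSupport, hleft] at hn
    split_ifs at hn with hnk
    · exact mem_insert.2 (Or.inl hnk)
    · exact hg (by rwa [mul_one] at hn)
  rw [nval_eq_sum_of_mulSupport_subset he ℓ h hh, right_mul_tGen_inv_mul_inl,
    sum_filter_le_zpow_eq_add_mul _ _ (mem_insert_self _ _), sub_add_cancel,
    nval_eq_sum_of_mulSupport_subset he ℓ g hg, add_comm, hleft, if_pos rfl]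
  congr 2
  refine sum_congr rfl fun n hn => ?_
  rw [hleft, if_neg (by have := (mem_filter.1 hn).2; omega), mul_one]

/-- For `g = μ tᵏ ∈ G` and `λ ∈ Λ`,
`𝔫(g · t⁻¹ · [λ]₀) = ℓ · 𝔫(g) + ‖μ_{k−1} · λ‖`, where `‖·‖ : Λ ≃ {0,…,ℓ−1}` is a fixed
bijection (with `‖1_Λ‖ = 0`). -/
theorem nval_mul_tinv_lam {Λ : Type*} [Group Λ] [Fintype Λ] {ℓ : ℕ} (e : Λ ≃ Fin ℓ)
    (he : (e 1 : ℕ) = 0) (g : Lamp Λ) (x : Λ) :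
    nval (fun y => (e y : ℕ)) ℓ (g * (tGen Λ)⁻¹ * SemidirectProduct.inl (lam 0 x)) =
      ℓ * nval (fun y => (e y : ℕ)) ℓ g +
        (e (g.left.val (Multiplicative.toAdd g.right - 1) * x) : ℕ) :=
  nval_mul_tinv_lam_general e he g x
end

section
/- Let Λ be a finite group with a bijection ‖·‖ : Λ → {0,…,ℓ−1}, and let G = (⊕_ℤ Λ) ⋊ ℤ with 𝔫(μ, k) = Σ_{n ≥ k} ‖μ_n‖ ℓ^{n−k}. For any g ∈ G, the map λ ↦ 𝔫(g t⁻¹ [λ]₀) is a bijection from Λ onto the set of integers {ℓ·𝔫(g), ℓ·𝔫(g)+1, …, ℓ·𝔫(g)+ℓ−1}. -/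
/-!
`𝔫(μ tᵏ)` reads the lamps `μ_k, μ_{k+1}, …` as the base-`ℓ` digits of a number, least significant
first. Right multiplication by `t⁻¹` moves the cursor to `k - 1`, which multiplies `𝔫` by `ℓ` and
prepends the digit `‖μ_{k-1}‖`; the factor `[λ]₀` then changes that lamp to `μ_{k-1} λ`. As `λ`
ranges over `Λ`, so does `μ_{k-1} λ`, and the new digit takes each value `0, …, ℓ - 1` once.
-/

open Finset Multiplicative Filter

-- `Set.Finite.mem_toFinset` does not fire as a simp lemma here: the finiteness proof has type
-- `f.val ∈ FinSupp Λ`, not `(Function.mulSupport f.val).Finite`.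
lemma FinSupp.mem_toFinset {Λ : Type*} [Group Λ] (f : FinSupp Λ) (n : ℤ) :
    n ∈ (f.prop : (Function.mulSupport f.val).Finite).toFinset ↔ f.val n ≠ 1 :=
  Set.Finite.mem_toFinset _

section
variable {Λ : Type*} [Group Λ] {norm : Λ → ℕ} {ℓ : ℕ}

lemma shiftAut_apply (k : ℤ) (f : FinSupp Λ) (n : ℤ) :
    (shiftAut Λ k f).val n = f.val (n - k) :=
  rfl

lemma shiftAut_one_zpow (m : ℤ) : shiftAut Λ 1 ^ m = shiftAut Λ m := by
  induction m using Int.induction_on with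
  | zero => ext f n; simp [shiftAut_apply]
  | succ k ih =>
    ext f n
    rw [zpow_add_one, MulAut.mul_apply, ih, shiftAut_apply, shiftAut_apply, shiftAut_apply]
    ring_nf
  | pred k ih =>
    ext f n
    rw [zpow_sub_one, MulAut.mul_apply, ih, shiftAut_apply, MulAut.inv_apply]
    show f.val (n - -k + 1) = f.val (n - (-k - 1))
    ring_nf

lemma lam_apply (i : ℤ) (x : Λ) (n : ℤ) : (lam i x).val n = if n = i then x else 1 := rfl

lemma shiftAut_lam (k i : ℤ) (x : Λ) : shiftAut Λ k (lam i x) = lam (i + k) x := by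
  ext n
  simp only [shiftAut_apply, lam_apply, sub_eq_iff_eq_add]

lemma mul_tGen_inv_mul_inl_lam (g : Lamp Λ) (x : Λ) :
    g * (tGen Λ)⁻¹ * SemidirectProduct.inl (lam 0 x) =
      ⟨g.left * lam (toAdd g.right - 1) x, ofAdd (toAdd g.right - 1)⟩ := by
  ext1
  · simp [tGen, shiftAut_one_zpow, shiftAut_lam, sub_eq_add_neg]
  · simp [tGen, sub_eq_add_neg]

lemma mul_tGen (h : Lamp Λ) : h * tGen Λ = ⟨h.left, h.right * ofAdd 1⟩ := by
  ext1 <;> simp [tGen]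

lemma nval_eq_sum_range (hnorm : norm 1 = 0) (h : Lamp Λ) {N : ℕ}
    (hN : ∀ n, h.left.val n ≠ 1 → n < toAdd h.right + N) :
    nval norm ℓ h = ∑ j ∈ range N, norm (h.left.val (toAdd h.right + j)) * ℓ ^ j := by
  set k := toAdd h.right
  set F : ℤ → ℕ := fun n => norm (h.left.val n) * ℓ ^ (n - k).toNat
  have hinj : Set.InjOn (fun j : ℕ => k + j) (range N) := fun i _ j _ hij => by simpa using hij
  calc nval norm ℓ h = ∑ n ∈ (range N).image (fun j : ℕ => k + j), F n := by
        refine sum_subset_zero_on_sdiff (fun n hn => ?_) (fun n hn => ?_) (fun n _ => rfl)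
        · simp only [mem_filter, FinSupp.mem_toFinset] at hn
          simp only [mem_image, mem_range]
          exact ⟨(n - k).toNat, by have := hN n hn.1; omega, by omega⟩
        · have : h.left.val n = 1 := by
            simp only [Finset.mem_sdiff, mem_filter, FinSupp.mem_toFinset, mem_image] at hn
            by_contra hne
            obtain ⟨j, -, rfl⟩ := hn.1
            exact hn.2 ⟨hne, by omega⟩
          simp [F, this, hnorm]
    _ = ∑ j ∈ range N, F (k + j) := sum_image hinj
    _ = _ := sum_congr rfl fun j _ => by simp [F]

lemma eventually_nval_eq_sum_range (hnorm : norm 1 = 0) (h : Lamp Λ) :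
    ∀ᶠ N in atTop,
      nval norm ℓ h = ∑ j ∈ range N, norm (h.left.val (toAdd h.right + j)) * ℓ ^ j := by
  obtain ⟨M, hM⟩ := h.left.prop.toFinset.bddAbove
  refine eventually_atTop.2 ⟨(M - toAdd h.right).toNat + 1, fun N hN => ?_⟩
  refine nval_eq_sum_range hnorm h fun n hn => ?_
  have := hM (h.left.prop.mem_toFinset.2 hn)
  omega

lemma nval_congr (hnorm : norm 1 = 0) {g h : Lamp Λ} (hright : g.right = h.right)
    (hleft : ∀ n, toAdd g.right ≤ n → g.left.val n = h.left.val n) :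
    nval norm ℓ g = nval norm ℓ h := by
  obtain ⟨N, hg, hh⟩ :=
    ((eventually_nval_eq_sum_range hnorm g).and (eventually_nval_eq_sum_range hnorm h)).exists
  rw [hg, hh, hright]
  refine sum_congr rfl fun j _ => ?_
  rw [hleft _ (by rw [hright]; omega)]

lemma nval_eq_add_mul_nval_mul_tGen (hnorm : norm 1 = 0) (h : Lamp Λ) :
    nval norm ℓ h = norm (h.left.val (toAdd h.right)) + ℓ * nval norm ℓ (h * tGen Λ) := by
  obtain ⟨N, hN, hNt⟩ := ((tendsto_add_atTop_nat 1).eventually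
    (eventually_nval_eq_sum_range (ℓ := ℓ) hnorm h)).and
    (eventually_nval_eq_sum_range hnorm (h * tGen Λ)) |>.exists
  rw [hN, hNt, sum_range_succ', mul_sum, add_comm]
  simp only [mul_tGen, toAdd_mul, toAdd_ofAdd, Nat.cast_add, Nat.cast_one, pow_succ, Nat.cast_zero,
    add_zero, pow_zero, mul_one]
  congr 1
  refine sum_congr rfl fun j _ => ?_
  rw [add_assoc, add_comm 1 (j : ℤ)]
  ring

end

lemma bijOn_add_val_of_equiv_fin {α : Type*} {ℓ : ℕ} (e : α ≃ Fin ℓ) (a : ℕ) :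
    Set.BijOn (fun x => a + (e x : ℕ)) Set.univ (Set.Ico a (a + ℓ)) := by
  refine ⟨fun x _ => ⟨Nat.le_add_right a _, Nat.add_lt_add_left (e x).isLt a⟩,
    fun x _ y _ hxy => e.injective (Fin.ext (by simpa using hxy)), fun m hm => ?_⟩
  obtain ⟨ham, hma⟩ := hm
  exact ⟨e.symm ⟨m - a, by omega⟩, trivial, by simp only [Equiv.apply_symm_apply]; omega⟩

theorem nval_roleModel_bijOn_general {Λ : Type*} [Group Λ] {ℓ : ℕ} (e : Λ ≃ Fin ℓ)
    (he : (e 1 : ℕ) = 0) (g : Lamp Λ) :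
    Set.BijOn
      (fun x : Λ => nval (fun y => (e y : ℕ)) ℓ (g * (tGen Λ)⁻¹ * SemidirectProduct.inl (lam 0 x)))
      Set.univ
      (Set.Ico (ℓ * nval (fun y => (e y : ℕ)) ℓ g) (ℓ * nval (fun y => (e y : ℕ)) ℓ g + ℓ)) := by
  set c := g.left.val (toAdd g.right - 1)
  have key (x : Λ) : nval (fun y => (e y : ℕ)) ℓ (g * (tGen Λ)⁻¹ * SemidirectProduct.inl (lam 0 x))
      = ℓ * nval (fun y => (e y : ℕ)) ℓ g + e (c * x) := by
    rw [mul_tGen_inv_mul_inl_lam, nval_eq_add_mul_nval_mul_tGen he, mul_tGen, add_comm]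
    congr 2
    · refine nval_congr he (by simp) fun n hn => ?_
      simp only [toAdd_mul, toAdd_ofAdd, sub_add_cancel] at hn
      simp [lam_apply, show n ≠ toAdd g.right - 1 by omega]
    · simp [lam_apply, c]
  simp only [key]
  exact bijOn_add_val_of_equiv_fin ((Equiv.mulLeft c).trans e) _

/-- For any `g ∈ G`, the map `λ ↦ 𝔫(g t⁻¹ [λ]₀)` is a bijection from `Λ`
onto `{ℓ·𝔫(g), …, ℓ·𝔫(g) + ℓ − 1}`. -/
theorem nval_roleModel_bijOn {Λ : Type*} [Group Λ] [Fintype Λ] {ℓ : ℕ} (e : Λ ≃ Fin ℓ)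
    (he : (e 1 : ℕ) = 0) (g : Lamp Λ) :
    Set.BijOn
      (fun x : Λ => nval (fun y => (e y : ℕ)) ℓ (g * (tGen Λ)⁻¹ * SemidirectProduct.inl (lam 0 x)))
      Set.univ
      (Set.Ico (ℓ * nval (fun y => (e y : ℕ)) ℓ g) (ℓ * nval (fun y => (e y : ℕ)) ℓ g + ℓ)) :=
  nval_roleModel_bijOn_general e he g
end

section
/- Let G = (⊕_ℤ Λ) ⋊ ℤ be a lamplighter group, Γ a finite index normal subgroup of G, and L = Γ ∩ (⊕_ℤ Λ). Then every μ ∈ ⊕_ℤ Λ can be written as μ = μ_L · μ₋ where μ_L ∈ L and μ₋ ∈ ⊕_{−ℕ} Λ, the subgroup of elements of ⊕_ℤ Λ supported on strictly negative coordinates. -/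
/-!
Since `Γ` is normal of index `k`, it contains `t^{ks}` for every `s : ℤ`, hence also the
commutator `μ t^{-ks} μ⁻¹ t^{ks} = μ · (σ μ)⁻¹`, where `σ` is the shift by `-ks`. For `ks`
beyond the support of `μ`, `σ μ` lives on negative coordinates, and `μ = (μ · (σ μ)⁻¹) · σ μ`.
-/

namespace SemidirectProduct

variable {N G : Type*} [Group N] [Group G] {φ : G →* MulAut N}

theorem inl_mul_inv_aut_mem {Γ : Subgroup (N ⋊[φ] G)} [Γ.Normal] {g : G} (hg : inr g ∈ Γ)
    (n : N) : inl (n * (φ g n)⁻¹) ∈ Γ := by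
  have hcomm : (inl (n * (φ g n)⁻¹) : N ⋊[φ] G) = inl n * inr g * (inl n)⁻¹ * (inr g)⁻¹ := by
    simp only [map_mul, map_inv, inl_aut]
    group
  rw [hcomm]
  exact mul_mem (Subgroup.Normal.conj_mem ‹_› _ hg _) (inv_mem hg)

end SemidirectProduct

open SemidirectProduct

theorem zpowersHom_shiftAut_apply {Λ : Type*} [Group Λ] (z : ℤ) (f : FinSupp Λ) (n : ℤ) :
    (zpowersHom _ (shiftAut Λ 1) (Multiplicative.ofAdd z) f).val n = f.val (n - z) := by
  rw [zpowersHom_apply, toAdd_ofAdd]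
  induction z using Int.induction_on generalizing f n with
  | zero => simp
  | succ k ih =>
    rw [zpow_add_one, MulAut.mul_apply, ih]
    exact congrArg f.val (by ring)
  | pred k ih =>
    rw [zpow_sub_one, MulAut.mul_apply, ih]
    exact congrArg f.val (by ring)

theorem inr_ofAdd_mul_index_mem {Λ : Type*} [Group Λ] (Γ : Subgroup (Lamp Λ)) [Γ.Normal]
    (z : ℤ) : (inr (Multiplicative.ofAdd (z * Γ.index)) : Lamp Λ) ∈ Γ := by
  rw [mul_comm, ← smul_eq_mul, natCast_zsmul, ofAdd_nsmul, map_pow]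
  exact Γ.pow_index_mem _

theorem finsupp_decomposition_general {Λ : Type*} [Group Λ]
    (Γ : Subgroup (Lamp Λ)) [Γ.Normal] [Γ.FiniteIndex] (μ : FinSupp Λ) :
    ∃ μL μm : FinSupp Λ, SemidirectProduct.inl μL ∈ Γ ∧
      (∀ i : ℤ, 0 ≤ i → μm.val i = 1) ∧ μ = μL * μm := by
  obtain ⟨B, hB⟩ := μ.prop.bddAbove
  set shift := zpowersHom _ (shiftAut Λ 1) (Multiplicative.ofAdd (-(max B 0 + 1) * Γ.index))
  have hindex : 0 < Γ.index := Nat.pos_of_ne_zero Subgroup.FiniteIndex.index_ne_zero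
  refine ⟨μ * (shift μ)⁻¹, shift μ, inl_mul_inv_aut_mem (inr_ofAdd_mul_index_mem Γ _) μ,
    fun i hi => ?_, by group⟩
  rw [zpowersHom_shiftAut_apply]
  by_contra hne
  have hiB : i - -(max B 0 + 1) * Γ.index ≤ B := hB hne
  nlinarith [le_max_left B 0, le_max_right B 0, (Int.natCast_pos.mpr hindex : (0 : ℤ) < Γ.index)]

/-- if `Γ` is a finite index normal subgroup of `G` and
`L = Γ ∩ (⊕_ℤ Λ)`, then every `μ ∈ ⊕_ℤ Λ` can be written as `μ = μ_L · μ₋` with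
`μ_L ∈ L` and `μ₋ ∈ ⊕_{−ℕ} Λ` (supported on strictly negative coordinates). -/
theorem finsupp_decomposition {Λ : Type*} [Group Λ] [Fintype Λ]
    (Γ : Subgroup (Lamp Λ)) [Γ.Normal] [Γ.FiniteIndex] (μ : FinSupp Λ) :
    ∃ μL μm : FinSupp Λ, SemidirectProduct.inl μL ∈ Γ ∧
      (∀ i : ℤ, 0 ≤ i → μm.val i = 1) ∧ μ = μL * μm :=
  finsupp_decomposition_general Γ μ
end

section
/- Let Λ be a finite group of cardinality ℓ ≥ 3 and G = (⊕_ℤ Λ) ⋊ ℤ. Suppose σ : G → Bool satisfies: for every g ∈ G, σ(g) occurs strictly more than ℓ/2 but strictly fewer than ℓ times among the values σ(g t⁻¹ [λ]₀) for λ ∈ Λ. Then for all g ∈ G, all n ≥ 1, and all μ ∈ Λ_{−1}·Λ_{−2}⋯Λ_{−n} (elements of ⊕_ℤ Λ supported on coordinates −1 through −n), σ(g μ) = σ(g). -/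
/-- `b ℓ n` is `true` iff the number of `1`s in the base-`ℓ` expansion of `n` is odd. -/
def bSeq (ℓ n : ℕ) : Bool := decide (((Nat.digits ℓ n).count 1) % 2 = 1)

/-! Induction on `n`. Since `g μ t⁻¹ [x]₀ = g t⁻¹ [μ₋₁ x]₀ μ'` with `μ'` supported on
`−(n−1), …, −1`, the induction hypothesis says that `σ` on the role model coset of `g μ` is `σ` on
that of `g`, translated by `μ₋₁`. So `σ (g μ)` and `σ g` are strict majority values of the same
multiset, hence equal. -/

/-- The element `μ'` above: `t μ t⁻¹` with its coordinate `0` erased. -/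
def shiftEraseZero {Λ : Type*} [Group Λ] (μ : FinSupp Λ) : FinSupp Λ :=
  ⟨fun j => if j = 0 then 1 else μ.val (j - 1), (μ.prop.image (· + 1)).subset (by
    intro j hj
    refine ⟨j - 1, fun h => hj ?_, by ring⟩
    simp only [h, ite_self])⟩

open SemidirectProduct Finset

theorem eq_of_lt_two_mul_card_filter {α β : Type*} [Fintype α] [DecidableEq β] (f : α → β)
    {a b : β} (ha : Fintype.card α < 2 * #{x | f x = a})
    (hb : Fintype.card α < 2 * #{x | f x = b}) : a = b := by
  classical
  by_contra hab
  have hdisj : Disjoint ({x | f x = a} : Finset α) ({x | f x = b} : Finset α) :=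
    disjoint_filter.2 fun x _ hxa hxb => hab (hxa.symm.trans hxb)
  have := (card_union_of_disjoint hdisj).symm.trans_le (card_le_univ _)
  omega

theorem card_filter_mul_left {α β : Type*} [Group α] [Fintype α] [DecidableEq β]
    (f : α → β) (c : α) (b : β) : #{x | f (c * x) = b} = #{x | f x = b} :=
  card_equiv (Equiv.mulLeft c) (by simp)

section Lamp

variable {Λ : Type*} [Group Λ]

theorem inl_mul_tGen_inv (μ : FinSupp Λ) :
    (inl μ : Lamp Λ) * (tGen Λ)⁻¹ = (tGen Λ)⁻¹ * inl (shiftAut Λ 1 μ) := by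
  have h := inl_aut (φ := zpowersHom _ (shiftAut Λ 1)) (Multiplicative.ofAdd 1) μ
  rw [zpowersHom_apply, toAdd_ofAdd, zpow_one] at h
  rw [h, tGen, map_inv]
  group

theorem shiftAut_one_mul_lam_zero (μ : FinSupp Λ) (x : Λ) :
    shiftAut Λ 1 μ * lam 0 x = lam 0 (μ.val (-1) * x) * shiftEraseZero μ := by
  refine Subtype.ext (funext fun j => ?_)
  show μ.val (j - 1) * (if j = 0 then x else 1)
    = (if j = 0 then μ.val (-1) * x else 1) * (if j = 0 then 1 else μ.val (j - 1))
  rcases eq_or_ne j 0 with rfl | hj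
  · simp
  · simp [hj]

theorem inl_mul_tGen_inv_mul_lam_zero (μ : FinSupp Λ) (x : Λ) :
    (inl μ : Lamp Λ) * (tGen Λ)⁻¹ * inl (lam 0 x)
      = (tGen Λ)⁻¹ * inl (lam 0 (μ.val (-1) * x)) * inl (shiftEraseZero μ) := by
  rw [inl_mul_tGen_inv, mul_assoc, ← map_mul, shiftAut_one_mul_lam_zero, map_mul, mul_assoc]

theorem mulSupport_shiftEraseZero_subset {μ : FinSupp Λ} {n : ℕ}
    (hμ : Function.mulSupport μ.val ⊆ Set.Icc (-(n + 1 : ℤ)) (-1)) :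
    Function.mulSupport (shiftEraseZero μ).val ⊆ Set.Icc (-(n : ℤ)) (-1) := by
  intro j hj
  have hj0 : j ≠ 0 := fun h => hj (if_pos h)
  have := hμ (show μ.val (j - 1) ≠ 1 from fun h => hj ((if_neg hj0).trans h))
  simp only [Set.mem_Icc] at this ⊢
  omega

variable [Fintype Λ]

/-- `σ g` is a strict majority value of `σ` on the role model coset `g t⁻¹ Λ₀`. -/
def FollowsStrictMajority (σ : Lamp Λ → Bool) : Prop :=
  ∀ g : Lamp Λ, Fintype.card Λ < 2 * #{x | σ (g * (tGen Λ)⁻¹ * inl (lam 0 x)) = σ g}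

variable {σ : Lamp Λ → Bool}

theorem FollowsStrictMajority.eq_of_translate (hσ : FollowsStrictMajority σ) {g h : Lamp Λ}
    (c : Λ)
    (hgh : ∀ x, σ (h * (tGen Λ)⁻¹ * inl (lam 0 x)) = σ (g * (tGen Λ)⁻¹ * inl (lam 0 (c * x)))) :
    σ h = σ g := by
  have hh := hσ h
  simp only [hgh] at hh
  rw [card_filter_mul_left (fun y => σ (g * (tGen Λ)⁻¹ * inl (lam 0 y)))] at hh
  exact eq_of_lt_two_mul_card_filter _ hh (hσ g)

theorem FollowsStrictMajority.apply_mul_inl_eq (hσ : FollowsStrictMajority σ) (n : ℕ)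
    (g : Lamp Λ) {μ : FinSupp Λ} (hμ : Function.mulSupport μ.val ⊆ Set.Icc (-(n : ℤ)) (-1)) :
    σ (g * inl μ) = σ g := by
  induction n generalizing g μ with
  | zero =>
    have hμ1 : μ = 1 := Subtype.ext (funext fun i => by
      by_contra hi
      have := hμ hi
      simp only [Set.mem_Icc] at this
      omega)
    rw [hμ1, map_one, mul_one]
  | succ n ih =>
    refine hσ.eq_of_translate (μ.val (-1)) fun x => ?_
    rw [mul_assoc g, mul_assoc g, inl_mul_tGen_inv_mul_lam_zero, ← mul_assoc, ← mul_assoc,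
      ih _ (mulSupport_shiftEraseZero_subset (by exact_mod_cast hμ))]

end Lamp

theorem conformist_constant_general {Λ : Type*} [Group Λ] [Fintype Λ] {ℓ : ℕ}
    (hcard : Fintype.card Λ = ℓ) (σ : Lamp Λ → Bool)
    (hσ : ∀ g : Lamp Λ,
      ℓ < 2 * (Finset.univ.filter (fun x : Λ =>
          σ (g * (tGen Λ)⁻¹ * SemidirectProduct.inl (lam 0 x)) = σ g)).card ∧
      (Finset.univ.filter (fun x : Λ =>
          σ (g * (tGen Λ)⁻¹ * SemidirectProduct.inl (lam 0 x)) = σ g)).card < ℓ) :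
    ∀ (g : Lamp Λ) (n : ℕ), 1 ≤ n → ∀ μ : FinSupp Λ,
      (∀ i : ℤ, μ.val i ≠ 1 → -(n : ℤ) ≤ i ∧ i ≤ -1) →
      σ (g * SemidirectProduct.inl μ) = σ g := by
  intro g n _ μ hμ
  subst hcard
  exact FollowsStrictMajority.apply_mul_inl_eq (fun g => (hσ g).1) n g fun i hi => hμ i hi

/-- if `σ : G → Bool` satisfies the conformist (non-unanimous strict
majority) condition on every role model set, then `σ` is constant on cosets of elements
supported on coordinates `−1, …, −n`: `σ(g μ) = σ(g)`. -/
theorem conformist_constant {Λ : Type*} [Group Λ] [Fintype Λ] [DecidableEq Λ] {ℓ : ℕ}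
    (hℓ : 3 ≤ ℓ) (hcard : Fintype.card Λ = ℓ) (σ : Lamp Λ → Bool)
    (hσ : ∀ g : Lamp Λ,
      ℓ < 2 * (Finset.univ.filter (fun x : Λ =>
          σ (g * (tGen Λ)⁻¹ * SemidirectProduct.inl (lam 0 x)) = σ g)).card ∧
      (Finset.univ.filter (fun x : Λ =>
          σ (g * (tGen Λ)⁻¹ * SemidirectProduct.inl (lam 0 x)) = σ g)).card < ℓ) :
    ∀ (g : Lamp Λ) (n : ℕ), 1 ≤ n → ∀ μ : FinSupp Λ,
      (∀ i : ℤ, μ.val i ≠ 1 → -(n : ℤ) ≤ i ∧ i ≤ -1) →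
      σ (g * SemidirectProduct.inl μ) = σ g :=
  conformist_constant_general hcard σ hσ
end
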